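/- arXiv:2012.00962 — 2 statements merged into one kernel-verified Lean document; each statement's English description precedes it below -/
import Mathlib

section
/- Let ρ ∈ (0,1), α > 0, let (k_n) be a strictly increasing sequence of natural numbers with k_0 = 0, and let v be a cycle-Lyapunov sequence for (ρ, α, (k_n)). Then Σ_{t=0}^{∞} v(t) ≤ (1 + α/(1−ρ)) · v(0) · Σ_{n=0}^{∞} Ξ(n) (as an inequality in [0, ∞]); in particular, if Σ_{n=0}^{∞} Ξ(n) < ∞, then Σ_{t=0}^{∞} v(t) < ∞. -/
open scoped ENNReal

/-- `v : ℕ → ℝ` is a cycle-Lyapunov sequence for `(ρ, α, k)`: it is nonnegative, satisfies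
`v (k n + 1) ≤ α * v (k n)` at the start of each cycle, and contracts by `ρ` at every step
`t` with `k n + 1 ≤ t ≤ k (n+1) - 1` within a cycle. -/
def IsCycleLyapunov (ρ α : ℝ) (k : ℕ → ℕ) (v : ℕ → ℝ) : Prop :=
  (∀ t, 0 ≤ v t) ∧
  (∀ n, v (k n + 1) ≤ α * v (k n)) ∧
  (∀ n t, k n + 1 ≤ t → t < k (n + 1) → v (t + 1) ≤ ρ * v t)

/-- `Ξ(n) = α^n · ρ^{Σ_{i=1}^{n} (Δ_i − 1)}` where `Δ_i = k i − k (i−1)`; in particular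
`Ξ(0) = 1` (empty sum). -/
noncomputable def Xi (ρ α : ℝ) (k : ℕ → ℕ) (n : ℕ) : ℝ :=
  α ^ n * ρ ^ (∑ i ∈ Finset.range n, (k (i + 1) - k i - 1))

/-! A cycle-Lyapunov sequence grows by at most `α` at the first step of a cycle and then decays
geometrically, so its value at the start of cycle `n` is at most `Ξ(n) v(0)`, and its sum over
cycle `n` is at most `(1 + α / (1 - ρ))` times that value. Summing over the cycles, which
partition `ℕ`, gives the bound. -/

theorem Finset.sum_range_eq_sum_range_sum_Ico {M : Type*} [AddCommMonoid M] (f : ℕ → M)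
    {k : ℕ → ℕ} (hk : Monotone k) (hk0 : k 0 = 0) (N : ℕ) :
    ∑ t ∈ range (k N), f t = ∑ n ∈ range N, ∑ t ∈ Ico (k n) (k (n + 1)), f t := by
  induction N with
  | zero => simp [hk0]
  | succ N ih =>
    rw [sum_range_succ, ← ih, range_eq_Ico, range_eq_Ico,
      sum_Ico_consecutive f (Nat.zero_le _) (hk N.le_succ)]

theorem ENNReal.tsum_eq_tsum_sum_Ico (f : ℕ → ℝ≥0∞) {k : ℕ → ℕ} (hk : StrictMono k)
    (hk0 : k 0 = 0) :
    ∑' t, f t = ∑' n, ∑ t ∈ Finset.Ico (k n) (k (n + 1)), f t := by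
  rw [ENNReal.tsum_eq_iSup_nat' hk.tendsto_atTop, ENNReal.tsum_eq_iSup_nat]
  simp only [Finset.sum_range_eq_sum_range_sum_Ico f hk.monotone hk0]

theorem Xi_nonneg {ρ α : ℝ} (hρ : 0 ≤ ρ) (hα : 0 ≤ α) (k : ℕ → ℕ) (n : ℕ) :
    0 ≤ Xi ρ α k n := by
  unfold Xi
  positivity

theorem Xi_succ (ρ α : ℝ) (k : ℕ → ℕ) (n : ℕ) :
    Xi ρ α k (n + 1) = ρ ^ (k (n + 1) - k n - 1) * (α * Xi ρ α k n) := by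
  rw [Xi, Xi, Finset.sum_range_succ, pow_add, pow_succ]
  ring

namespace IsCycleLyapunov

variable {ρ α : ℝ} {k : ℕ → ℕ} {v : ℕ → ℝ}

theorem le_pow_mul (hv : IsCycleLyapunov ρ α k v) (hρ : 0 ≤ ρ) {n j : ℕ}
    (hj : k n + 1 + j ≤ k (n + 1)) :
    v (k n + 1 + j) ≤ ρ ^ j * (α * v (k n)) := by
  have hdecay : ∀ i < j, v (k n + 1 + (i + 1)) ≤ ρ * v (k n + 1 + i) := fun i hi =>
    hv.2.2 n (k n + 1 + i) (by omega) (by omega)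
  calc v (k n + 1 + j) ≤ ρ ^ j * v (k n + 1 + 0) :=
        le_geom (u := fun i => v (k n + 1 + i)) hρ j hdecay
    _ ≤ ρ ^ j * (α * v (k n)) := mul_le_mul_of_nonneg_left (hv.2.1 n) (pow_nonneg hρ j)

theorem apply_le_Xi_mul (hv : IsCycleLyapunov ρ α k v) (hρ : 0 ≤ ρ) (hα : 0 ≤ α)
    (hk : StrictMono k) (hk0 : k 0 = 0) (n : ℕ) :
    v (k n) ≤ Xi ρ α k n * v 0 := by
  induction n with
  | zero => simp [Xi, hk0]
  | succ n ih =>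
    have hkn : k n < k (n + 1) := hk n.lt_succ_self
    calc v (k (n + 1)) = v (k n + 1 + (k (n + 1) - k n - 1)) := by congr 1; omega
      _ ≤ ρ ^ (k (n + 1) - k n - 1) * (α * v (k n)) := hv.le_pow_mul hρ (by omega)
      _ ≤ ρ ^ (k (n + 1) - k n - 1) * (α * (Xi ρ α k n * v 0)) := by gcongr
      _ = Xi ρ α k (n + 1) * v 0 := by rw [Xi_succ]; ring

theorem sum_Ico_le (hv : IsCycleLyapunov ρ α k v) (hρ₀ : 0 ≤ ρ) (hρ₁ : ρ < 1) (hα : 0 ≤ α)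
    {n : ℕ} (hkn : k n < k (n + 1)) :
    ∑ t ∈ Finset.Ico (k n) (k (n + 1)), v t ≤ (1 + α / (1 - ρ)) * v (k n) := by
  have hgeom (m : ℕ) : ∑ j ∈ Finset.range m, ρ ^ j ≤ 1 / (1 - ρ) := by
    rw [Finset.range_eq_Ico, ← pow_zero ρ]
    exact geom_sum_Ico_le_of_lt_one hρ₀ hρ₁
  have htail : ∑ t ∈ Finset.Ico (k n + 1) (k (n + 1)), v t ≤ α / (1 - ρ) * v (k n) := by
    rw [Finset.sum_Ico_eq_sum_range]
    calc ∑ j ∈ Finset.range (k (n + 1) - (k n + 1)), v (k n + 1 + j)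
        ≤ ∑ j ∈ Finset.range (k (n + 1) - (k n + 1)), ρ ^ j * (α * v (k n)) :=
          Finset.sum_le_sum fun j hj =>
            hv.le_pow_mul hρ₀ (by have := Finset.mem_range.1 hj; omega)
      _ = (∑ j ∈ Finset.range (k (n + 1) - (k n + 1)), ρ ^ j) * (α * v (k n)) :=
          (Finset.sum_mul ..).symm
      _ ≤ 1 / (1 - ρ) * (α * v (k n)) :=
          mul_le_mul_of_nonneg_right (hgeom _) (mul_nonneg hα (hv.1 _))
      _ = α / (1 - ρ) * v (k n) := by ring
  rw [Finset.sum_eq_sum_Ico_succ_bot hkn]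
  linarith

end IsCycleLyapunov

theorem total_sum_bound (ρ α : ℝ) (hρ : ρ ∈ Set.Ioo (0 : ℝ) 1) (hα : 0 < α)
    (k : ℕ → ℕ) (hk : StrictMono k) (hk0 : k 0 = 0)
    (v : ℕ → ℝ) (hv : IsCycleLyapunov ρ α k v) :
    (∑' t : ℕ, ENNReal.ofReal (v t)) ≤
      ENNReal.ofReal (1 + α / (1 - ρ)) * ENNReal.ofReal (v 0) *
        ∑' n : ℕ, ENNReal.ofReal (Xi ρ α k n) ∧
    ((∑' n : ℕ, ENNReal.ofReal (Xi ρ α k n)) < ⊤ →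
      (∑' t : ℕ, ENNReal.ofReal (v t)) < ⊤) := by
  obtain ⟨hρ₀, hρ₁⟩ := hρ
  have hC : 0 ≤ 1 + α / (1 - ρ) := by
    have : 0 < 1 - ρ := sub_pos.2 hρ₁
    positivity
  have hcycle (n : ℕ) : ∑ t ∈ Finset.Ico (k n) (k (n + 1)), ENNReal.ofReal (v t) ≤
      ENNReal.ofReal (1 + α / (1 - ρ)) * ENNReal.ofReal (v 0) *
        ENNReal.ofReal (Xi ρ α k n) := by
    have hreal :
        ∑ t ∈ Finset.Ico (k n) (k (n + 1)), v t ≤ (1 + α / (1 - ρ)) * (v 0 * Xi ρ α k n) :=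
      calc ∑ t ∈ Finset.Ico (k n) (k (n + 1)), v t ≤ (1 + α / (1 - ρ)) * v (k n) :=
            hv.sum_Ico_le hρ₀.le hρ₁ hα.le (hk n.lt_succ_self)
        _ ≤ (1 + α / (1 - ρ)) * (v 0 * Xi ρ α k n) := by
            rw [mul_comm (v 0)]
            exact mul_le_mul_of_nonneg_left (hv.apply_le_Xi_mul hρ₀.le hα.le hk hk0 n) hC
    rw [← ENNReal.ofReal_sum_of_nonneg fun t _ => hv.1 t, mul_assoc, ← ENNReal.ofReal_mul (hv.1 0),
      ← ENNReal.ofReal_mul hC]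
    exact ENNReal.ofReal_le_ofReal hreal
  have hbound : (∑' t, ENNReal.ofReal (v t)) ≤
      ENNReal.ofReal (1 + α / (1 - ρ)) * ENNReal.ofReal (v 0) *
        ∑' n, ENNReal.ofReal (Xi ρ α k n) := by
    rw [ENNReal.tsum_eq_tsum_sum_Ico _ hk hk0, ← ENNReal.tsum_mul_left]
    exact ENNReal.tsum_le_tsum hcycle
  exact ⟨hbound, fun hfin => hbound.trans_lt
    (ENNReal.mul_lt_top (ENNReal.mul_lt_top ENNReal.ofReal_lt_top ENNReal.ofReal_lt_top) hfin)⟩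
end

section
/- Let S be a finite type, let S₀ and S₁ be disjoint subsets of S with S₀ ∪ S₁ = S, and let V : S × S → ℝ be a matrix with nonnegative entries whose row sums satisfy Σ_{j∈S} V(i,j) ≤ 1 for every i ∈ S. Define D(1) := V_{0,0} and D(l) := V_{0,1} · (V_{1,1})^{l−2} · V_{1,0} for l ≥ 2, where V_{0,0}, V_{0,1}, V_{1,1}, V_{1,0} are the submatrices of V restricted to (S₀,S₀), (S₀,S₁), (S₁,S₁), (S₁,S₀). Then all entries of every D(l) are nonnegative, and for every L ≥ 1 and every i ∈ S₀: Σ_{l=1}^{L} Σ_{j∈S₀} [D(l)]_{i,j} ≤ 1. Consequently, for all i, j ∈ S₀ the series Σ_{l=1}^{∞} [D(l)]_{i,j} converges, and the matrix Ṽ := Σ_{l=1}^{∞} D(l) has nonnegative entries with row sums at most 1. -/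
/-!
Read `V` as a substochastic transition matrix and `D l i j` as the probability of leaving
`i ∈ S₀` and first re-entering `S₀`, at `j`, after exactly `l` steps. The mass still travelling
inside `S₁` after `k + 1` steps is the row-sum vector `V₀₁ V₁₁ᵏ 𝟙`. Since every row of `V`
restricted to `S₁` sums to at most one, this vector splits into the next first-return mass
`V₀₁ V₁₁ᵏ V₁₀ 𝟙` plus at most the next travelling mass `V₀₁ V₁₁ᵏ⁺¹ 𝟙`, so the row sums of
`D 1, …, D L` telescope to at most one. The series statements then follow because
nonnegative series with bounded partial sums converge.
-/

open Matrix Finset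

theorem Finset.sum_range_add_le_of_add_le {α : Type*} [AddCommMonoid α] [PartialOrder α]
    [IsOrderedAddMonoid α] {d r : ℕ → α} (h : ∀ n, d n + r (n + 1) ≤ r n) (n : ℕ) :
    ∑ k ∈ range n, d k + r n ≤ r 0 := by
  induction n with
  | zero => simp
  | succ n ih =>
    calc ∑ k ∈ range (n + 1), d k + r (n + 1) = ∑ k ∈ range n, d k + (d n + r (n + 1)) := by
          rw [sum_range_succ, add_assoc]
      _ ≤ ∑ k ∈ range n, d k + r n := by gcongr; exact h n
      _ ≤ r 0 := ih

namespace Matrix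

variable {ι κ μ R : Type*} [Fintype κ] [Semiring R]

theorem mulVec_one_apply (M : Matrix ι κ R) (i : ι) : (M *ᵥ 1) i = ∑ j, M i j := by
  simp [mulVec, dotProduct]

variable [PartialOrder R] [IsOrderedRing R]

theorem mul_apply_nonneg {M : Matrix ι κ R} {N : Matrix κ μ R} (hM : ∀ i j, 0 ≤ M i j)
    (hN : ∀ i j, 0 ≤ N i j) (i : ι) (j : μ) : 0 ≤ (M * N) i j :=
  sum_nonneg fun k _ => mul_nonneg (hM i k) (hN k j)

theorem mulVec_mono_of_nonneg {M : Matrix ι κ R} (hM : ∀ i j, 0 ≤ M i j) {v w : κ → R}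
    (h : v ≤ w) : M *ᵥ v ≤ M *ᵥ w := fun i =>
  sum_le_sum fun k _ => mul_le_mul_of_nonneg_left (h k) (hM i k)

theorem mulVec_one_nonneg {M : Matrix ι κ R} (hM : ∀ i j, 0 ≤ M i j) : 0 ≤ M *ᵥ 1 := by
  simpa [mulVec_zero] using mulVec_mono_of_nonneg hM zero_le_one

theorem mul_mulVec_one_add_le [Fintype μ] {M : Matrix ι κ R} (hM : ∀ i j, 0 ≤ M i j)
    {B : Matrix κ κ R} {C : Matrix κ μ R} (h : C *ᵥ 1 + B *ᵥ 1 ≤ 1) :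
    (M * C) *ᵥ 1 + (M * B) *ᵥ 1 ≤ M *ᵥ 1 := by
  rw [← mulVec_mulVec, ← mulVec_mulVec, ← mulVec_add]
  exact mulVec_mono_of_nonneg hM h

theorem sum_range_firstReturn_mulVec_one_le [Fintype ι] [DecidableEq κ]
    {V₀₀ : Matrix ι ι R} {V₀₁ : Matrix ι κ R} {V₁₁ : Matrix κ κ R} {V₁₀ : Matrix κ ι R}
    (h₀₁ : ∀ i j, 0 ≤ V₀₁ i j) (h₁₁ : ∀ i j, 0 ≤ V₁₁ i j)
    (hrow₀ : V₀₀ *ᵥ 1 + V₀₁ *ᵥ 1 ≤ 1) (hrow₁ : V₁₀ *ᵥ 1 + V₁₁ *ᵥ 1 ≤ 1) (n : ℕ) :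
    V₀₀ *ᵥ 1 + ∑ k ∈ range n, (V₀₁ * V₁₁ ^ k * V₁₀) *ᵥ 1 ≤ 1 := by
  have hstep (k : ℕ) :
      (V₀₁ * V₁₁ ^ k * V₁₀) *ᵥ 1 + (V₀₁ * V₁₁ ^ (k + 1)) *ᵥ 1 ≤ (V₀₁ * V₁₁ ^ k) *ᵥ 1 := by
    rw [pow_succ, ← Matrix.mul_assoc]
    exact mul_mulVec_one_add_le (mul_apply_nonneg h₀₁ (pow_apply_nonneg h₁₁ k)) hrow₁
  have hleft : 0 ≤ (V₀₁ * V₁₁ ^ n) *ᵥ 1 :=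
    mulVec_one_nonneg (mul_apply_nonneg h₀₁ (pow_apply_nonneg h₁₁ n))
  calc V₀₀ *ᵥ 1 + ∑ k ∈ range n, (V₀₁ * V₁₁ ^ k * V₁₀) *ᵥ 1
      ≤ V₀₀ *ᵥ 1 + (∑ k ∈ range n, (V₀₁ * V₁₁ ^ k * V₁₀) *ᵥ 1 + (V₀₁ * V₁₁ ^ n) *ᵥ 1) := by
        gcongr; exact le_add_of_nonneg_right hleft
    _ ≤ V₀₀ *ᵥ 1 + V₀₁ *ᵥ 1 := by
        gcongr
        simpa using sum_range_add_le_of_add_le (r := fun k => (V₀₁ * V₁₁ ^ k) *ᵥ 1) hstep n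
    _ ≤ 1 := hrow₀

end Matrix

section Summability

variable {ι : Type*} [Fintype ι] {f : ℕ → ι → ℝ} {c : ℝ}

theorem summable_apply_of_sum_range_sum_le (hf : ∀ n i, 0 ≤ f n i)
    (h : ∀ n, ∑ l ∈ range n, ∑ i, f l i ≤ c) (i : ι) : Summable fun n => f n i :=
  summable_of_sum_range_le (fun n => hf n i) fun n =>
    (sum_le_sum fun l _ => single_le_sum (fun j _ => hf l j) (mem_univ i)).trans (h n)

theorem sum_tsum_le_of_sum_range_sum_le (hf : ∀ n i, 0 ≤ f n i)
    (h : ∀ n, ∑ l ∈ range n, ∑ i, f l i ≤ c) : ∑ i, ∑' n, f n i ≤ c := by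
  have hsumm := summable_apply_of_sum_range_sum_le hf h
  rw [← Summable.tsum_finsetSum fun i _ => hsumm i]
  exact (summable_sum fun i _ => hsumm i).tsum_le_of_sum_range_le h

end Summability

theorem first_return_matrices_substochastic
    {S : Type*} [Fintype S] [DecidableEq S]
    (S₀ S₁ : Finset S) (hdisj : Disjoint S₀ S₁) (hunion : S₀ ∪ S₁ = Finset.univ)
    (V : Matrix S S ℝ) (hVnn : ∀ i j, 0 ≤ V i j) (hVrow : ∀ i, ∑ j, V i j ≤ 1)
    (D : ℕ → Matrix {x // x ∈ S₀} {x // x ∈ S₀} ℝ)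
    (hD1 : D 1 = Matrix.of fun (a b : {x // x ∈ S₀}) => V a b)
    (hDl : ∀ l, 2 ≤ l → D l =
      Matrix.of (fun (a : {x // x ∈ S₀}) (b : {x // x ∈ S₁}) => V a b) *
        (Matrix.of fun (a b : {x // x ∈ S₁}) => V a b) ^ (l - 2) *
        Matrix.of (fun (a : {x // x ∈ S₁}) (b : {x // x ∈ S₀}) => V a b)) :
    (∀ l, 1 ≤ l → ∀ i j, 0 ≤ D l i j) ∧
    (∀ L, 1 ≤ L → ∀ i, ∑ l ∈ Finset.Icc 1 L, ∑ j, D l i j ≤ 1) ∧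
    (∀ i j, Summable fun l : ℕ => D (l + 1) i j) ∧
    (∀ i j, 0 ≤ ∑' l : ℕ, D (l + 1) i j) ∧
    (∀ i, ∑ j, ∑' l : ℕ, D (l + 1) i j ≤ 1) := by
  have hrow (T : Finset S) :
      (of fun (a : T) (b : S₀) => V a b) *ᵥ 1 + (of fun (a : T) (b : S₁) => V a b) *ᵥ 1 ≤ 1 := by
    intro i
    simp only [Pi.add_apply, Pi.one_apply, mulVec_one_apply, of_apply]
    rw [sum_coe_sort S₀ (V i), sum_coe_sort S₁ (V i), ← sum_union hdisj, hunion]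
    exact hVrow i
  have hDnn (l : ℕ) (hl : 1 ≤ l) (i j : S₀) : 0 ≤ D l i j := by
    obtain rfl | hl := hl.eq_or_lt
    · rw [hD1]; exact hVnn i j
    · rw [hDl l hl]
      exact mul_apply_nonneg (mul_apply_nonneg (fun _ _ => hVnn _ _)
        (pow_apply_nonneg (fun _ _ => hVnn _ _) _)) (fun _ _ => hVnn _ _) i j
  set V₀₁ := of fun (a : S₀) (b : S₁) => V a b
  set V₁₁ := of fun (a b : S₁) => V a b
  have hpartial (n : ℕ) (i : S₀) : ∑ l ∈ range n, ∑ j, D (l + 1) i j ≤ 1 := by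
    cases n with
    | zero => simp
    | succ n =>
      have := sum_range_firstReturn_mulVec_one_le (V₀₁ := V₀₁) (V₁₁ := V₁₁)
        (fun _ _ => hVnn _ _) (fun _ _ => hVnn _ _) (hrow S₀) (hrow S₁) n i
      rw [sum_range_succ', hD1, add_comm]
      simpa only [Pi.add_apply, Pi.one_apply, Finset.sum_apply, mulVec_one_apply,
        hDl _ le_add_self, Nat.add_sub_cancel] using this
  have hnn (n : ℕ) (i j : S₀) : 0 ≤ D (n + 1) i j := hDnn (n + 1) n.succ_pos i j
  refine ⟨hDnn, fun L _ i => ?_,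
    fun i j => summable_apply_of_sum_range_sum_le (hnn · i) (hpartial · i) j,
    fun i j => tsum_nonneg (hnn · i j),
    fun i => sum_tsum_le_of_sum_range_sum_le (hnn · i) (hpartial · i)⟩
  rw [← Ico_add_one_right_eq_Icc, sum_Ico_eq_sum_range]
  simpa [add_comm] using hpartial L i
end
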